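/- The cut rule — from Π → A and Δ₁, A, Δ₂ → C derive Δ₁, Π, Δ₂ → C — is admissible in L* + R, for an arbitrary finite set R of Buszkowski's rules. -/

import Mathlib

/-- Formulae (types) of the Lambek calculus with a modality:
`var` = primitive type, `div B A` = B / A, `ldiv A B` = A \ B, `bang A` = !A. -/
inductive Fm : Type
  | var : ℕ → Fm
  | div : Fm → Fm → Fm
  | ldiv : Fm → Fm → Fm
  | bang : Fm → Fm
  deriving DecidableEq

open Fm

/-- A Buszkowski rule: either (B₁) "from Φ₁ → p and Φ₂ → q derive Φ₁, Φ₂ → r"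
or (B₂) "from Φ, q → p derive Φ → r", for fixed variables p, q, r. -/
inductive BRule : Type
  | b1 (p q r : ℕ)
  | b2 (p q r : ℕ)
  deriving DecidableEq

/-- L* + R: the Lambek calculus L* (empty antecedents allowed) extended with
a finite set R of Buszkowski rules. -/
inductive LStarR (R : Finset BRule) : List Fm → Fm → Prop
  | ax (A : Fm) : LStarR R [A] A
  | divL (Γ Δ₁ Δ₂ : List Fm) (A B C : Fm) :
      LStarR R Γ A → LStarR R (Δ₁ ++ B :: Δ₂) C →
      LStarR R (Δ₁ ++ div B A :: (Γ ++ Δ₂)) C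
  | divR (Γ : List Fm) (A B : Fm) :
      LStarR R (Γ ++ [A]) B → LStarR R Γ (div B A)
  | ldivL (Γ Δ₁ Δ₂ : List Fm) (A B C : Fm) :
      LStarR R Γ A → LStarR R (Δ₁ ++ B :: Δ₂) C →
      LStarR R (Δ₁ ++ Γ ++ ldiv A B :: Δ₂) C
  | ldivR (Γ : List Fm) (A B : Fm) :
      LStarR R (A :: Γ) B → LStarR R Γ (ldiv A B)
  | b1 (p q r : ℕ) (Φ₁ Φ₂ : List Fm) :
      BRule.b1 p q r ∈ R → LStarR R Φ₁ (var p) → LStarR R Φ₂ (var q) →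
      LStarR R (Φ₁ ++ Φ₂) (var r)
  | b2 (p q r : ℕ) (Φ : List Fm) :
      BRule.b2 p q r ∈ R → LStarR R (Φ ++ [var q]) (var p) →
      LStarR R Φ (var r)

/-!
Induction on the cut formula `A`, and for fixed `A` on the derivation of the right premise.
A Buszkowski rule concludes a primitive type from premises whose antecedents are parts of its
own, so like every rule in which the cut occurrence of `A` is not principal it commutes with
the cut. Left rules only introduce `B / A'` and `A' \ B`, so for these the principal case
remains: the right rules `(→/)`, `(→\)` are invertible (a derivation of `Φ → B / A'` cannot end
with a Buszkowski rule), which turns `Φ → B / A'` into `Φ, A' → B`, and two cuts on the smaller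
formulas `A'` and `B` finish it.
-/

namespace List

variable {α : Type*}

theorem append_eq_append_cons_iff {l₁ l₂ r₁ r₂ : List α} {a : α} :
    l₁ ++ l₂ = r₁ ++ a :: r₂ ↔
      (∃ m, l₁ = r₁ ++ a :: m ∧ r₂ = m ++ l₂) ∨ (∃ m, r₁ = l₁ ++ m ∧ l₂ = m ++ a :: r₂) := by
  constructor
  · simp only [append_eq_append_iff, cons_eq_append_iff]
    rintro (⟨m, rfl, rfl⟩ | ⟨m, rfl, ⟨rfl, rfl⟩ | ⟨m, rfl, rfl⟩⟩)
    · exact .inr ⟨m, rfl, rfl⟩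
    · exact .inr ⟨[], by simp, rfl⟩
    · exact .inl ⟨m, rfl, rfl⟩
  · rintro (⟨m, rfl, rfl⟩ | ⟨m, rfl, rfl⟩) <;> simp

theorem append_cons_eq_append_cons {l₁ l₂ r₁ r₂ : List α} {a b : α}
    (h : l₁ ++ b :: l₂ = r₁ ++ a :: r₂) :
    (∃ m, r₁ = l₁ ++ b :: m ∧ l₂ = m ++ a :: r₂) ∨ (r₁ = l₁ ∧ a = b ∧ r₂ = l₂) ∨
      (∃ m, l₁ = r₁ ++ a :: m ∧ r₂ = m ++ b :: l₂) := by
  rcases append_eq_append_cons_iff.1 h with hl | ⟨m, rfl, hr⟩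
  · exact .inr (.inr hl)
  · rcases cons_eq_append_iff.1 hr with ⟨rfl, hm⟩ | ⟨m, rfl, rfl⟩
    · simp only [cons.injEq] at hm
      exact .inr (.inl ⟨by simp, hm⟩)
    · exact .inl ⟨m, rfl, rfl⟩

end List

variable {R : Finset BRule}

namespace LStarR

theorem divR_inv {Φ : List Fm} {A B : Fm} (h : LStarR R Φ (div B A)) :
    LStarR R (Φ ++ [A]) B := by
  generalize hD : div B A = D at h
  induction h with
  | ax =>
    subst hD
    simpa using divL [A] [] [] A B B (ax A) (ax B)
  | divL Γ Δ₁ Δ₂ _ _ _ hΓ _ _ ih =>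
    simpa using divL Γ Δ₁ (Δ₂ ++ [A]) _ _ _ hΓ (by simpa using ih hD)
  | divR _ _ _ h =>
    cases hD
    exact h
  | ldivL Γ Δ₁ Δ₂ _ _ _ hΓ _ _ ih =>
    simpa using ldivL Γ Δ₁ (Δ₂ ++ [A]) _ _ _ hΓ (by simpa using ih hD)
  | ldivR | b1 | b2 => cases hD

theorem ldivR_inv {Φ : List Fm} {A B : Fm} (h : LStarR R Φ (ldiv A B)) :
    LStarR R (A :: Φ) B := by
  generalize hD : ldiv A B = D at h
  induction h with
  | ax =>
    subst hD
    simpa using ldivL [A] [] [] A B B (ax A) (ax B)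
  | divL Γ Δ₁ Δ₂ _ _ _ hΓ _ _ ih =>
    simpa using divL Γ (A :: Δ₁) Δ₂ _ _ _ hΓ (by simpa using ih hD)
  | ldivL Γ Δ₁ Δ₂ _ _ _ hΓ _ _ ih =>
    simpa using ldivL Γ (A :: Δ₁) Δ₂ _ _ _ hΓ (by simpa using ih hD)
  | ldivR _ _ _ h =>
    cases hD
    exact h
  | divR | b1 | b2 => cases hD

end LStarR

def CutAdmissible (R : Finset BRule) (A : Fm) : Prop :=
  ∀ ⦃Φ Δ₁ Δ₂ : List Fm⦄ ⦃C : Fm⦄,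
    LStarR R Φ A → LStarR R (Δ₁ ++ A :: Δ₂) C → LStarR R (Δ₁ ++ Φ ++ Δ₂) C

namespace CutAdmissible

variable {Φ Γ Δ₁ Δ₂ : List Fm} {A B C : Fm}

theorem div_principal (hA : CutAdmissible R A) (hB : CutAdmissible R B)
    (h : LStarR R Φ (div B A)) (hl : LStarR R Γ A) (hr : LStarR R (Δ₁ ++ B :: Δ₂) C) :
    LStarR R (Δ₁ ++ Φ ++ Γ ++ Δ₂) C := by
  have hΦΓ : LStarR R (Φ ++ Γ) B := by simpa using hA hl h.divR_inv (Δ₁ := Φ) (Δ₂ := [])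
  simpa using hB hΦΓ hr

theorem ldiv_principal (hA : CutAdmissible R A) (hB : CutAdmissible R B)
    (h : LStarR R Φ (ldiv A B)) (hl : LStarR R Γ A) (hr : LStarR R (Δ₁ ++ B :: Δ₂) C) :
    LStarR R (Δ₁ ++ Γ ++ Φ ++ Δ₂) C := by
  have hΓΦ : LStarR R (Γ ++ Φ) B := by simpa using hA hl h.ldivR_inv (Δ₁ := []) (Δ₂ := Φ)
  simpa using hB hΓΦ hr

end CutAdmissible

def CutsInto (R : Finset BRule) (Φ : List Fm) (A : Fm) (Γ : List Fm) (C : Fm) : Prop :=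
  ∀ ⦃Δ₁ Δ₂ : List Fm⦄, Γ = Δ₁ ++ A :: Δ₂ → LStarR R (Δ₁ ++ Φ ++ Δ₂) C

namespace CutsInto

variable {Φ Γ Δ₁ Δ₂ : List Fm} {A A' B C : Fm}

theorem ax (hΦ : LStarR R Φ A) : CutsInto R Φ A [B] B := by
  intro E₁ E₂ h
  obtain ⟨rfl, rfl, rfl⟩ : E₁ = [] ∧ A = B ∧ E₂ = [] := by simpa [List.cons_eq_append_iff] using h
  simpa using hΦ

theorem divL (hl : LStarR R Γ A') (hr : LStarR R (Δ₁ ++ B :: Δ₂) C)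
    (ihl : CutsInto R Φ A Γ A') (ihr : CutsInto R Φ A (Δ₁ ++ B :: Δ₂) C)
    (principal : A = div B A' → LStarR R (Δ₁ ++ Φ ++ Γ ++ Δ₂) C) :
    CutsInto R Φ A (Δ₁ ++ div B A' :: (Γ ++ Δ₂)) C := by
  intro E₁ E₂ h
  rcases List.append_cons_eq_append_cons h with ⟨M, rfl, hM⟩ | ⟨rfl, hA, rfl⟩ | ⟨M, rfl, rfl⟩
  · rcases List.append_eq_append_cons_iff.1 hM with ⟨N, rfl, rfl⟩ | ⟨N, rfl, rfl⟩
    · simpa using LStarR.divL _ Δ₁ Δ₂ _ _ _ (ihl rfl) hr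
    · simpa using LStarR.divL Γ Δ₁ (N ++ Φ ++ E₂) _ _ _ hl
        (by simpa using ihr (Δ₁ := Δ₁ ++ B :: N) (Δ₂ := E₂) (by simp))
  · simpa using principal hA
  · simpa using LStarR.divL Γ (E₁ ++ Φ ++ M) Δ₂ _ _ _ hl
      (by simpa using ihr (Δ₁ := E₁) (Δ₂ := M ++ B :: Δ₂) (by simp))

theorem divR (ih : CutsInto R Φ A (Γ ++ [A']) B) : CutsInto R Φ A Γ (div B A') :=
  fun E₁ E₂ h => .divR _ _ _ (by simpa using ih (Δ₂ := E₂ ++ [A']) (by simp [h]))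

theorem ldivL (hl : LStarR R Γ A') (hr : LStarR R (Δ₁ ++ B :: Δ₂) C)
    (ihl : CutsInto R Φ A Γ A') (ihr : CutsInto R Φ A (Δ₁ ++ B :: Δ₂) C)
    (principal : A = ldiv A' B → LStarR R (Δ₁ ++ Γ ++ Φ ++ Δ₂) C) :
    CutsInto R Φ A (Δ₁ ++ Γ ++ ldiv A' B :: Δ₂) C := by
  intro E₁ E₂ h
  rcases List.append_cons_eq_append_cons h with ⟨M, rfl, rfl⟩ | ⟨rfl, hA, rfl⟩ | ⟨M, hM, rfl⟩
  · simpa using LStarR.ldivL Γ Δ₁ (M ++ Φ ++ E₂) _ _ _ hl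
      (by simpa using ihr (Δ₁ := Δ₁ ++ B :: M) (Δ₂ := E₂) (by simp))
  · simpa using principal hA
  · rcases List.append_eq_append_cons_iff.1 hM with ⟨N, rfl, rfl⟩ | ⟨N, rfl, rfl⟩
    · simpa using LStarR.ldivL Γ (E₁ ++ Φ ++ N) Δ₂ _ _ _ hl
        (by simpa using ihr (Δ₁ := E₁) (Δ₂ := N ++ B :: Δ₂) (by simp))
    · simpa using LStarR.ldivL _ Δ₁ Δ₂ _ _ _ (ihl rfl) hr

theorem ldivR (ih : CutsInto R Φ A (A' :: Γ) B) : CutsInto R Φ A Γ (ldiv A' B) :=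
  fun E₁ E₂ h => .ldivR _ _ _ (by simpa using ih (Δ₁ := A' :: E₁) (by simp [h]))

theorem b1 {p q r : ℕ} {Γ₁ Γ₂ : List Fm} (hR : BRule.b1 p q r ∈ R)
    (h₁ : LStarR R Γ₁ (var p)) (h₂ : LStarR R Γ₂ (var q))
    (ih₁ : CutsInto R Φ A Γ₁ (var p)) (ih₂ : CutsInto R Φ A Γ₂ (var q)) :
    CutsInto R Φ A (Γ₁ ++ Γ₂) (var r) := by
  intro E₁ E₂ h
  rcases List.append_eq_append_cons_iff.1 h with ⟨M, rfl, rfl⟩ | ⟨M, rfl, rfl⟩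
  · simpa using LStarR.b1 p q r _ _ hR (ih₁ rfl) h₂
  · simpa using LStarR.b1 p q r _ _ hR h₁ (ih₂ rfl)

theorem b2 {p q r : ℕ} (hR : BRule.b2 p q r ∈ R) (ih : CutsInto R Φ A (Γ ++ [var q]) (var p)) :
    CutsInto R Φ A Γ (var r) :=
  fun E₁ E₂ h => .b2 p q r _ hR (by simpa using ih (Δ₂ := E₂ ++ [var q]) (by simp [h]))

end CutsInto

theorem CutAdmissible.of_components {A : Fm}
    (hdiv : ∀ B A', A = div B A' → CutAdmissible R A' ∧ CutAdmissible R B)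
    (hldiv : ∀ A' B, A = ldiv A' B → CutAdmissible R A' ∧ CutAdmissible R B) :
    CutAdmissible R A := by
  intro Φ Δ₁ Δ₂ C hΦ h
  suffices ∀ {Γ D}, LStarR R Γ D → CutsInto R Φ A Γ D from this h rfl
  intro Γ D hΓ
  induction hΓ with
  | ax => exact .ax hΦ
  | divL _ _ _ _ _ _ hl hr ihl ihr =>
    refine .divL hl hr ihl ihr fun hA => ?_
    exact (hdiv _ _ hA).1.div_principal (hdiv _ _ hA).2 (hA ▸ hΦ) hl hr
  | divR _ _ _ _ ih => exact .divR ih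
  | ldivL _ _ _ _ _ _ hl hr ihl ihr =>
    refine .ldivL hl hr ihl ihr fun hA => ?_
    exact (hldiv _ _ hA).1.ldiv_principal (hldiv _ _ hA).2 (hA ▸ hΦ) hl hr
  | ldivR _ _ _ _ ih => exact .ldivR ih
  | b1 _ _ _ _ _ hR h₁ h₂ ih₁ ih₂ => exact .b1 hR h₁ h₂ ih₁ ih₂
  | b2 _ _ _ _ hR _ ih => exact .b2 hR ih

theorem cutAdmissible (R : Finset BRule) : ∀ A, CutAdmissible R A
  | var _ | bang _ => .of_components (by simp) (by simp)
  | div B A =>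
    .of_components (fun _ _ h => by cases h; exact ⟨cutAdmissible R A, cutAdmissible R B⟩) (by simp)
  | ldiv A B =>
    .of_components (by simp) (fun _ _ h => by cases h; exact ⟨cutAdmissible R A, cutAdmissible R B⟩)

theorem stmt5 (R : Finset BRule) (Φ Δ₁ Δ₂ : List Fm) (A C : Fm)
    (h₁ : LStarR R Φ A) (h₂ : LStarR R (Δ₁ ++ A :: Δ₂) C) :
    LStarR R (Δ₁ ++ Φ ++ Δ₂) C :=
  cutAdmissible R A h₁ h₂
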